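/- arXiv:2005.06014 — 4 statements merged into one kernel-verified Lean document; each statement's English description precedes it below -/
import Mathlib

section
/- Let s ≥ 0, K > 0, let m ≥ 0 be an integer, and let δ ∈ (0, ν(s)) where ν(s) ∈ (0,1) is sufficiently small (depending only on s). Let (λ_j)_{j≥0} be a sequence of nonnegative reals such that λ_j ≤ K for all j ≥ 0 and λ_{j+1} ≤ (1 − δ) λ_j for all j ≥ m. Then Σ_{j=0}^∞ λ_j (1 + j²)^s ≤ C(s) · K · ( (m+1)^{2s+1} + δ^{−(2s+1)} + δ^{−1} (m+1)^{2s} ) for some constant C(s) > 0 depending only on s. -/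
/-!
Write `p = 2s`, so that `(1 + j²) ^ s ≤ (j + 1) ^ p`, and split the sum at `m`. Below `m`
every term is at most `K (m + 1) ^ p`. Beyond it, `λ (m + k) ≤ K (1 - δ) ^ k` and the weight is
at most `2 ^ p ((m + 1) ^ p + k ^ p)`: the first part sums to `(m + 1) ^ p / δ`, and in the
second the factor `k ^ p ≤ (2 (p + 1) / δ) ^ p e ^ (δ k / 2)` uses up only half of the decay
`(1 - δ) ^ k ≤ e ^ (-δ k)`, so it sums to `O(δ ^ (-(p + 1)))`.
-/

open Real Finset

lemma rpow_le_mul_exp {p c x : ℝ} (hp : 0 ≤ p) (hc : 0 < c) (hx : 0 ≤ x) :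
    x ^ p ≤ ((p + 1) / c) ^ p * exp (c * x) := by
  set a := (p + 1) / c
  have ha : 0 < a := by positivity
  have hxa : 0 ≤ x / a := by positivity
  calc x ^ p = a ^ p * (x / a) ^ p := by rw [← mul_rpow ha.le hxa, mul_div_cancel₀ _ ha.ne']
    _ ≤ a ^ p * exp (x / a) ^ p := by gcongr; linarith [add_one_le_exp (x / a)]
    _ = a ^ p * exp (p * (x / a)) := by rw [← exp_mul, mul_comm (x / a)]
    _ ≤ a ^ p * exp ((p + 1) * (x / a)) := by gcongr; linarith
    _ = a ^ p * exp (c * x) := by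
        congr 2
        simp only [a]
        field_simp

lemma add_rpow_le_two_rpow_mul {a b p : ℝ} (ha : 0 ≤ a) (hb : 0 ≤ b) (hp : 0 ≤ p) :
    (a + b) ^ p ≤ 2 ^ p * (a ^ p + b ^ p) := by
  have hmax : 0 ≤ max a b := ha.trans (le_max_left a b)
  calc (a + b) ^ p ≤ (2 * max a b) ^ p := by
        gcongr; linarith [le_max_left a b, le_max_right a b]
    _ = 2 ^ p * max a b ^ p := mul_rpow zero_le_two hmax
    _ ≤ 2 ^ p * (a ^ p + b ^ p) := by
        gcongr
        rcases max_cases a b with ⟨h, -⟩ | ⟨h, -⟩ <;> rw [h] <;>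
          linarith [rpow_nonneg ha p, rpow_nonneg hb p]

lemma one_add_sq_rpow_le {x s : ℝ} (hx : 0 ≤ x) (hs : 0 ≤ s) :
    (1 + x ^ 2) ^ s ≤ (x + 1) ^ (2 * s) := by
  calc (1 + x ^ 2) ^ s ≤ ((x + 1) ^ 2) ^ s := by gcongr; nlinarith
    _ = (x + 1) ^ (2 * s) := by
        rw [← rpow_natCast, ← rpow_mul (by positivity), Nat.cast_ofNat]

lemma inv_one_sub_exp_neg_le {x : ℝ} (hx : 0 < x) : (1 - exp (-x))⁻¹ ≤ 1 + x⁻¹ := by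
  have hexp : exp (-x) * (1 + x) ≤ 1 := by
    calc exp (-x) * (1 + x) ≤ exp (-x) * exp x := by gcongr; linarith [add_one_le_exp x]
      _ = 1 := by rw [← exp_add, neg_add_cancel, exp_zero]
  have hlow : x / (1 + x) ≤ 1 - exp (-x) := by
    rw [div_le_iff₀ (by positivity)]; nlinarith
  calc (1 - exp (-x))⁻¹ ≤ (x / (1 + x))⁻¹ := inv_anti₀ (by positivity) hlow
    _ = 1 + x⁻¹ := by field_simp; ring

section GeometricTimesPower

variable {p δ : ℝ}

lemma one_sub_pow_mul_rpow_le (hp : 0 ≤ p) (hδ : 0 < δ) (hδ1 : δ ≤ 1) (k : ℕ) :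
    (1 - δ) ^ k * (k : ℝ) ^ p ≤ (2 * (p + 1) / δ) ^ p * exp (-(δ / 2)) ^ k := by
  have hpow : (k : ℝ) ^ p ≤ (2 * (p + 1) / δ) ^ p * exp (δ / 2 * k) := by
    convert rpow_le_mul_exp hp (half_pos hδ) k.cast_nonneg using 3
    field_simp
  calc (1 - δ) ^ k * (k : ℝ) ^ p
      ≤ exp (-δ) ^ k * ((2 * (p + 1) / δ) ^ p * exp (δ / 2 * k)) := by
        gcongr
        exact one_sub_le_exp_neg δ
    _ = (2 * (p + 1) / δ) ^ p * exp (-(δ / 2)) ^ k := by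
        rw [← exp_nat_mul, ← exp_nat_mul, mul_left_comm, ← exp_add]
        ring_nf

lemma summable_one_sub_pow_mul_rpow (hp : 0 ≤ p) (hδ : 0 < δ) (hδ1 : δ ≤ 1) :
    Summable fun k : ℕ ↦ (1 - δ) ^ k * (k : ℝ) ^ p := by
  refine .of_nonneg_of_le (fun k ↦ by have := sub_nonneg.2 hδ1; positivity)
    (one_sub_pow_mul_rpow_le hp hδ hδ1) (.mul_left _ ?_)
  exact summable_geometric_of_lt_one (exp_pos _).le (exp_lt_one_iff.2 (by linarith))

lemma tsum_one_sub_pow_mul_rpow_le (hp : 0 ≤ p) (hδ : 0 < δ) (hδ1 : δ ≤ 1) :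
    ∑' k : ℕ, (1 - δ) ^ k * (k : ℝ) ^ p ≤ 3 * (2 * (p + 1)) ^ p / δ ^ (p + 1) := by
  have hq : exp (-(δ / 2)) < 1 := exp_lt_one_iff.2 (by linarith)
  have hgeom := summable_geometric_of_lt_one (exp_pos _).le hq
  calc ∑' k : ℕ, (1 - δ) ^ k * (k : ℝ) ^ p
      ≤ ∑' k : ℕ, (2 * (p + 1) / δ) ^ p * exp (-(δ / 2)) ^ k :=
        (summable_one_sub_pow_mul_rpow hp hδ hδ1).tsum_le_tsum
          (one_sub_pow_mul_rpow_le hp hδ hδ1) (hgeom.mul_left _)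
    _ = (2 * (p + 1) / δ) ^ p * (1 - exp (-(δ / 2)))⁻¹ := by
        rw [tsum_mul_left, tsum_geometric_of_lt_one (exp_pos _).le hq]
    _ ≤ (2 * (p + 1) / δ) ^ p * (3 / δ) := by
        gcongr
        calc (1 - exp (-(δ / 2)))⁻¹ ≤ 1 + (δ / 2)⁻¹ :=
              inv_one_sub_exp_neg_le (half_pos hδ)
          _ ≤ 3 / δ := by
              rw [inv_div, le_div_iff₀ hδ, add_mul, div_mul_cancel₀ _ hδ.ne']
              linarith
    _ = 3 * (2 * (p + 1)) ^ p / δ ^ (p + 1) := by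
        rw [div_rpow (by positivity) hδ.le, rpow_add_one hδ.ne']
        field_simp

end GeometricTimesPower

lemma le_pow_mul_of_le_mul {lam : ℕ → ℝ} {ρ K : ℝ} {m : ℕ} (hρ : 0 ≤ ρ)
    (hm : lam m ≤ K) (hdec : ∀ j, m ≤ j → lam (j + 1) ≤ ρ * lam j) (k : ℕ) :
    lam (k + m) ≤ ρ ^ k * K := by
  calc lam (k + m) ≤ ρ ^ k * lam (0 + m) :=
        le_geom (u := fun i ↦ lam (i + m)) hρ k fun i _ ↦ by
          simpa only [Nat.add_right_comm] using hdec (i + m) (Nat.le_add_left m i)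
    _ ≤ ρ ^ k * K := by rw [zero_add]; gcongr

section WeightedSum

variable {p K δ : ℝ} {m : ℕ} {lam w : ℕ → ℝ}

lemma sum_range_mul_le_mul_rpow (hK : 0 ≤ K) (hlamK : ∀ j, lam j ≤ K) (hw0 : ∀ j, 0 ≤ w j)
    (hw : ∀ j, w j ≤ ((j : ℝ) + 1) ^ p) (hp : 0 ≤ p) :
    ∑ j ∈ range m, lam j * w j ≤ K * ((m : ℝ) + 1) ^ (p + 1) := by
  have hterm : ∀ j ∈ range m, lam j * w j ≤ K * ((m : ℝ) + 1) ^ p := fun j hj ↦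
    calc lam j * w j ≤ K * ((j : ℝ) + 1) ^ p := by gcongr; exacts [hw0 j, hlamK j, hw j]
      _ ≤ K * ((m : ℝ) + 1) ^ p := by
          gcongr; exact_mod_cast (mem_range.1 hj).le
  calc ∑ j ∈ range m, lam j * w j ≤ m * (K * ((m : ℝ) + 1) ^ p) := by
        simpa using sum_le_sum hterm
    _ ≤ ((m : ℝ) + 1) * (K * ((m : ℝ) + 1) ^ p) := by gcongr; linarith
    _ = K * ((m : ℝ) + 1) ^ (p + 1) := by rw [rpow_add_one (by positivity)]; ring

lemma mul_le_of_geometric_decay (hp : 0 ≤ p) (hδ1 : δ ≤ 1) (hlam0 : ∀ j, 0 ≤ lam j)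
    (hlamK : ∀ j, lam j ≤ K) (hdec : ∀ j, m ≤ j → lam (j + 1) ≤ (1 - δ) * lam j)
    (hw : ∀ j, w j ≤ ((j : ℝ) + 1) ^ p) (k : ℕ) :
    lam (k + m) * w (k + m)
      ≤ 2 ^ p * K * (((m : ℝ) + 1) ^ p * (1 - δ) ^ k + (1 - δ) ^ k * (k : ℝ) ^ p) := by
  have hweight : w (k + m) ≤ 2 ^ p * (((m : ℝ) + 1) ^ p + (k : ℝ) ^ p) :=
    calc w (k + m) ≤ (((m : ℝ) + 1) + k) ^ p := by
          convert hw (k + m) using 2; push_cast; ring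
      _ ≤ 2 ^ p * (((m : ℝ) + 1) ^ p + (k : ℝ) ^ p) :=
          add_rpow_le_two_rpow_mul (by positivity) k.cast_nonneg hp
  calc lam (k + m) * w (k + m)
      ≤ ((1 - δ) ^ k * K) * (2 ^ p * (((m : ℝ) + 1) ^ p + (k : ℝ) ^ p)) :=
        mul_le_mul_of_nonneg (le_pow_mul_of_le_mul (sub_nonneg.2 hδ1) (hlamK m) hdec k) hweight
          (hlam0 _) (by positivity)
    _ = 2 ^ p * K * (((m : ℝ) + 1) ^ p * (1 - δ) ^ k + (1 - δ) ^ k * (k : ℝ) ^ p) := by ring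

theorem tsum_mul_le_of_geometric_decay (hp : 0 ≤ p) (hδ : 0 < δ) (hδ1 : δ ≤ 1)
    (hlam0 : ∀ j, 0 ≤ lam j) (hlamK : ∀ j, lam j ≤ K)
    (hdec : ∀ j, m ≤ j → lam (j + 1) ≤ (1 - δ) * lam j) (hw0 : ∀ j, 0 ≤ w j)
    (hw : ∀ j, w j ≤ ((j : ℝ) + 1) ^ p) :
    ∑' j, lam j * w j ≤ K * ((m : ℝ) + 1) ^ (p + 1)
      + 2 ^ p * K * (((m : ℝ) + 1) ^ p / δ + 3 * (2 * (p + 1)) ^ p / δ ^ (p + 1)) := by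
  have hK : 0 ≤ K := (hlam0 0).trans (hlamK 0)
  have hgeom := summable_geometric_of_lt_one (sub_nonneg.2 hδ1) (by linarith : 1 - δ < 1)
  have hpoly := summable_one_sub_pow_mul_rpow hp hδ hδ1
  have htail := mul_le_of_geometric_decay hp hδ1 hlam0 hlamK hdec hw
  have hmajorant := ((hgeom.mul_left (((m : ℝ) + 1) ^ p)).add hpoly).mul_left (2 ^ p * K)
  have hsummable_tail : Summable fun k ↦ lam (k + m) * w (k + m) :=
    .of_nonneg_of_le (fun k ↦ mul_nonneg (hlam0 _) (hw0 _)) htail hmajorant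
  rw [← ((summable_nat_add_iff m).1 hsummable_tail).sum_add_tsum_nat_add m]
  gcongr
  · exact sum_range_mul_le_mul_rpow hK hlamK hw0 hw hp
  calc ∑' k, lam (k + m) * w (k + m)
      ≤ ∑' k : ℕ,
          2 ^ p * K * (((m : ℝ) + 1) ^ p * (1 - δ) ^ k + (1 - δ) ^ k * (k : ℝ) ^ p) :=
        hsummable_tail.tsum_le_tsum htail hmajorant
    _ = 2 ^ p * K * (((m : ℝ) + 1) ^ p / δ + ∑' k : ℕ, (1 - δ) ^ k * (k : ℝ) ^ p) := by
        rw [tsum_mul_left, (hgeom.mul_left _).tsum_add hpoly, tsum_mul_left,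
          tsum_geometric_of_lt_one (sub_nonneg.2 hδ1) (by linarith), sub_sub_cancel,
          div_eq_mul_inv]
    _ ≤ 2 ^ p * K * (((m : ℝ) + 1) ^ p / δ + 3 * (2 * (p + 1)) ^ p / δ ^ (p + 1)) := by
        gcongr
        exact tsum_one_sub_pow_mul_rpow_le hp hδ hδ1

end WeightedSum

/-- Abstract sequence lemma combining the low-frequency and high-frequency estimates:
a bounded nonnegative sequence decaying geometrically with rate `1-δ` from index `m`
satisfies `Σ_j λ_j (1+j²)^s ≤ C(s) K ((m+1)^{2s+1} + δ^{-(2s+1)} + δ^{-1}(m+1)^{2s})`. -/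
theorem eigenvalue_sum_bound (s : ℝ) (hs : 0 ≤ s) :
    ∃ ν ∈ Set.Ioo (0:ℝ) 1, ∃ C > 0, ∀ K > 0, ∀ m : ℕ, ∀ δ ∈ Set.Ioo (0:ℝ) ν,
      ∀ lam : ℕ → ℝ, (∀ j, 0 ≤ lam j) → (∀ j, lam j ≤ K) →
        (∀ j, m ≤ j → lam (j + 1) ≤ (1 - δ) * lam j) →
        (∑' j : ℕ, lam j * (1 + (j : ℝ) ^ 2) ^ s)
          ≤ C * K * (((m : ℝ) + 1) ^ (2 * s + 1) + δ ^ (-(2 * s + 1))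
              + δ⁻¹ * ((m : ℝ) + 1) ^ (2 * s)) := by
  set B := 3 * (2 * (2 * s + 1)) ^ (2 * s)
  refine ⟨1 / 2, by norm_num, 1 + 2 ^ (2 * s) * (1 + B), by positivity, ?_⟩
  rintro K hK m δ ⟨hδ, hδν⟩ lam hlam0 hlamK hdec
  have hbound := tsum_mul_le_of_geometric_decay (by positivity) hδ (by linarith) hlam0 hlamK hdec
    (fun j ↦ by positivity) (fun j ↦ one_add_sq_rpow_le j.cast_nonneg hs)
  rw [rpow_neg hδ.le, ← div_eq_inv_mul, ← one_div]
  refine hbound.trans ?_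
  rw [← mul_one_div B]
  have h1 : 0 ≤ K * ((m : ℝ) + 1) ^ (2 * s + 1) := by positivity
  have h2 : 0 ≤ K * (1 / δ ^ (2 * s + 1)) := by positivity
  have h3 : 0 ≤ K * (((m : ℝ) + 1) ^ (2 * s) / δ) := by positivity
  have h4 : (0 : ℝ) ≤ 2 ^ (2 * s) := by positivity
  have hB : 0 ≤ B := by positivity
  linarith [mul_nonneg h4 h1, mul_nonneg h4 h2, mul_nonneg h4 h3, mul_nonneg (mul_nonneg h4 hB) h1,
    mul_nonneg (mul_nonneg h4 hB) h3]
end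

section
/- Let h ∈ C²(ℝ) with |h'(z)| ≤ M₁ and |h''(z)| ≤ M₂ for all z ∈ ℝ. Then for all a, b, c, d ∈ ℝ: |h(a) − h(b) − h(c) + h(d)| ≤ M₁ |a − b − c + d| + M₂ (|a − c| + |b − d|) |c − d|. -/
/-!
Put `γ t = h (b + t (a - b)) - h (d + t (c - d))`, so that `γ 1 - γ 0` is the second difference.
Its derivative `h'(β) (a - b) - h'(δ) (c - d)` splits as `h'(β) (a - b - c + d) + (h'(β) - h'(δ)) (c - d)`;
the first term is bounded by `M₁`, the second by the Lipschitz bound `M₂ |β - δ|` for `h'`, and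
`β - δ` is a convex combination of `a - c` and `b - d`. The mean value inequality on `[0, 1]` concludes.
-/

open Set

lemma abs_sub_le_of_abs_deriv_le {f : ℝ → ℝ} {M : ℝ} (hf : Differentiable ℝ f)
    (bound : ∀ z, |deriv f z| ≤ M) (x y : ℝ) : |f x - f y| ≤ M * |x - y| :=
  convex_univ.norm_image_sub_le_of_norm_deriv_le (fun z _ => hf z) (fun z _ => bound z)
    (mem_univ y) (mem_univ x)

lemma abs_mul_sub_mul_le (u v p q : ℝ) : |u * p - v * q| ≤ |u| * |p - q| + |u - v| * |q| := by
  calc |u * p - v * q| = |u * (p - q) + (u - v) * q| := by ring_nf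
    _ ≤ |u * (p - q)| + |(u - v) * q| := abs_add_le _ _
    _ = |u| * |p - q| + |u - v| * |q| := by rw [abs_mul, abs_mul]

lemma abs_one_sub_mul_add_mul_le {t : ℝ} (ht : t ∈ Icc (0 : ℝ) 1) (x y : ℝ) :
    |(1 - t) * x + t * y| ≤ |x| + |y| := by
  obtain ⟨ht₀, ht₁⟩ := ht
  calc |(1 - t) * x + t * y| ≤ |(1 - t) * x| + |t * y| := abs_add_le _ _
    _ = (1 - t) * |x| + t * |y| := by
      rw [abs_mul, abs_mul, abs_of_nonneg (sub_nonneg.2 ht₁), abs_of_nonneg ht₀]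
    _ ≤ |x| + |y| := by nlinarith [abs_nonneg x, abs_nonneg y]

lemma abs_sub_sub_add_le_of_abs_deriv_segment_le {h : ℝ → ℝ} (hd : Differentiable ℝ h)
    {a b c d C : ℝ} (bound : ∀ t ∈ Icc (0 : ℝ) 1,
      |deriv h (b + t * (a - b)) * (a - b) - deriv h (d + t * (c - d)) * (c - d)| ≤ C) :
    |h a - h b - h c + h d| ≤ C := by
  have hsegment (x y t : ℝ) :
      HasDerivAt (fun s => h (y + s * (x - y))) (deriv h (y + t * (x - y)) * (x - y)) t :=
    (hd _).hasDerivAt.comp t (by simpa using ((hasDerivAt_id t).mul_const (x - y)).const_add y)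
  have key := norm_image_sub_le_of_norm_deriv_le_segment_01'
    (f := fun s => h (b + s * (a - b)) - h (d + s * (c - d)))
    (fun t _ => ((hsegment a b t).sub (hsegment c d t)).hasDerivWithinAt)
    (fun t ht => bound t (Ico_subset_Icc_self ht))
  rw [Real.norm_eq_abs] at key
  convert key using 2
  simp only [zero_mul, add_zero, one_mul, add_sub_cancel]
  ring

/-- Pointwise second-difference estimate for a `C²` function with bounded first and
second derivatives:
`|h(a) - h(b) - h(c) + h(d)| ≤ M₁|a-b-c+d| + M₂(|a-c|+|b-d|)|c-d|`. -/
theorem second_difference_estimate (h : ℝ → ℝ) (M₁ M₂ : ℝ) (hh : ContDiff ℝ 2 h)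
    (h1 : ∀ z, |deriv h z| ≤ M₁) (h2 : ∀ z, |deriv (deriv h) z| ≤ M₂)
    (a b c d : ℝ) :
    |h a - h b - h c + h d| ≤ M₁ * |a - b - c + d| + M₂ * (|a - c| + |b - d|) * |c - d| := by
  have hM₂ : 0 ≤ M₂ := (abs_nonneg _).trans (h2 0)
  refine abs_sub_sub_add_le_of_abs_deriv_segment_le (hh.differentiable two_ne_zero) fun t ht => ?_
  set β := b + t * (a - b)
  set δ := d + t * (c - d)
  have hβδ : β - δ = (1 - t) * (b - d) + t * (a - c) := by ring
  calc |deriv h β * (a - b) - deriv h δ * (c - d)|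
      ≤ |deriv h β| * |a - b - (c - d)| + |deriv h β - deriv h δ| * |c - d| :=
        abs_mul_sub_mul_le _ _ _ _
    _ ≤ M₁ * |a - b - c + d| + M₂ * |β - δ| * |c - d| := by
        rw [show a - b - (c - d) = a - b - c + d by ring]
        gcongr
        exacts [h1 β, abs_sub_le_of_abs_deriv_le hh.differentiable_deriv_two h2 β δ]
    _ ≤ M₁ * |a - b - c + d| + M₂ * (|a - c| + |b - d|) * |c - d| := by
        rw [hβδ, add_comm |a - c|]
        gcongr
        exact abs_one_sub_mul_add_mul_le ht _ _
end

section
/- Let s ∈ (0,1) and for measurable u : [0,2π) → ℝ define the Gagliardo seminorm [u]²_s := ∫₀^{2π}∫₀^{2π} |u(x) − u(y)|² / |x − y|^{1+2s} dx dy. Let h ∈ C²(ℝ) with |h'| ≤ M and |h''| ≤ M everywhere, and let u₁, u₂ : [0,2π) → ℝ be bounded measurable functions with [u₁]_s ≤ k and [u₂]_s ≤ k. Then [h∘u₁ − h∘u₂]²_s ≤ 2M² [u₁ − u₂]²_s + 8M² k² ‖u₁ − u₂‖²_∞, where ‖·‖_∞ denotes the supremum norm. -/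
/-!
Write `v = u₁ - u₂`. The second difference `h(u₁ x) - h(u₂ x) - h(u₁ y) + h(u₂ y)` is at most
`M |v x - v y| + M (|u₁ x - u₁ y| + |u₂ x - u₂ y|) ‖v‖_∞` (mean value theorem along the segment
joining `(u₂ x, u₂ y)` to `(u₁ x, u₁ y)`). Squaring with `(α + β)² ≤ 2α² + 2β²` and integrating
against `|x - y|^{-(1+2s)}` bounds `[h∘u₁ - h∘u₂]²_s` by
`2M² [v]²_s + 4M² ‖v‖²_∞ ([u₁]²_s + [u₂]²_s)`.
-/

open MeasureTheory Set Function
open scoped ENNReal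

/-- The squared Gagliardo seminorm `[u]²_s` on `[0, 2π)`. -/
noncomputable def gagliardoSq (s : ℝ) (u : ℝ → ℝ) : ℝ≥0∞ :=
  ∫⁻ x in Set.Ico (0:ℝ) (2 * Real.pi), ∫⁻ y in Set.Ico (0:ℝ) (2 * Real.pi),
    ENNReal.ofReal (|u x - u y| ^ 2 / |x - y| ^ (1 + 2 * s))

/-- The derivative of `t ↦ f (b + t (a - b)) - f (d + t (c - d))` is
`f' p (a - b - (c - d)) + (f' p - f' q) (c - d)` with `|p - q| ≤ |a - c| + |b - d|` on `[0, 1]`. -/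
theorem abs_sub_sub_sub_le_of_hasDerivAt {f f' : ℝ → ℝ} {L K : ℝ}
    (hf : ∀ z, HasDerivAt f (f' z) z) (hL : ∀ z, |f' z| ≤ L)
    (hK : ∀ p q, |f' p - f' q| ≤ K * |p - q|) (a b c d : ℝ) :
    |f a - f b - (f c - f d)| ≤ L * |a - b - (c - d)| + K * (|a - c| + |b - d|) * |c - d| := by
  have hK0 : 0 ≤ K := by simpa using (abs_nonneg _).trans (hK 1 0)
  set p : ℝ → ℝ := fun t => b + t * (a - b)
  set q : ℝ → ℝ := fun t => d + t * (c - d)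
  have hderiv : ∀ t, HasDerivAt (fun t => f (p t) - f (q t))
      (f' (p t) * (a - b) - f' (q t) * (c - d)) t := by
    intro t
    have hp : HasDerivAt p (a - b) t := by
      simpa only [one_mul] using ((hasDerivAt_id' t).mul_const (a - b)).const_add b
    have hq : HasDerivAt q (c - d) t := by
      simpa only [one_mul] using ((hasDerivAt_id' t).mul_const (c - d)).const_add d
    exact ((hf _).comp t hp).sub ((hf _).comp t hq)
  have hdist : ∀ t ∈ Icc (0:ℝ) 1, |p t - q t| ≤ |a - c| + |b - d| := by
    rintro t ⟨ht0, ht1⟩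
    calc |p t - q t| = |t * (a - c) + (1 - t) * (b - d)| := by simp only [p, q]; ring_nf
      _ ≤ t * |a - c| + (1 - t) * |b - d| := by
        refine (abs_add_le _ _).trans_eq ?_
        rw [abs_mul, abs_mul, abs_of_nonneg ht0, abs_of_nonneg (sub_nonneg.2 ht1)]
      _ ≤ |a - c| + |b - d| := by nlinarith [abs_nonneg (a - c), abs_nonneg (b - d)]
  have hbound : ∀ t ∈ Icc (0:ℝ) 1, ‖f' (p t) * (a - b) - f' (q t) * (c - d)‖
      ≤ L * |a - b - (c - d)| + K * (|a - c| + |b - d|) * |c - d| := by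
    intro t ht
    calc ‖f' (p t) * (a - b) - f' (q t) * (c - d)‖
        = |f' (p t) * (a - b - (c - d)) + (f' (p t) - f' (q t)) * (c - d)| := by
          rw [Real.norm_eq_abs]; ring_nf
      _ ≤ |f' (p t)| * |a - b - (c - d)| + |f' (p t) - f' (q t)| * |c - d| := by
          rw [← abs_mul, ← abs_mul]; exact abs_add_le _ _
      _ ≤ L * |a - b - (c - d)| + K * (|a - c| + |b - d|) * |c - d| := by
          gcongr
          · exact hL _
          · exact (hK _ _).trans (by gcongr; exact hdist t ht)
  have := norm_image_sub_le_of_norm_deriv_le_segment_01'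
    (fun t _ => (hderiv t).hasDerivWithinAt) (fun t ht => hbound t (Ico_subset_Icc_self ht))
  simp only [p, q, Real.norm_eq_abs, one_mul, zero_mul, add_zero] at this
  convert this using 2
  ring_nf

theorem add_mul_add_sq_le (x y p q : ℝ) :
    (x + y * (p + q)) ^ 2 ≤ 2 * x ^ 2 + 4 * y ^ 2 * (p ^ 2 + q ^ 2) := by
  nlinarith [sq_nonneg (x - y * (p + q)), sq_nonneg (y * (p - q))]

section DoubleIntegral

variable {α β : Type*} [MeasurableSpace α] [MeasurableSpace β] {a b : ℝ≥0∞}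

theorem setLIntegral_le_mul_add_mul {μ : Measure α} {s : Set α} {f g₁ g₂ : α → ℝ≥0∞}
    (hg₁ : Measurable g₁) (hg₂ : Measurable g₂) (hf : ∀ x ∈ s, f x ≤ a * g₁ x + b * g₂ x) :
    ∫⁻ x in s, f x ∂μ ≤ a * ∫⁻ x in s, g₁ x ∂μ + b * ∫⁻ x in s, g₂ x ∂μ := by
  refine (setLIntegral_mono (by fun_prop) hf).trans_eq ?_
  rw [lintegral_add_left (hg₁.const_mul a), lintegral_const_mul a hg₁, lintegral_const_mul b hg₂]

theorem setLIntegral_setLIntegral_le_mul_add_mul {μ : Measure α} {ν : Measure β} [SFinite ν]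
    {s : Set α} {t : Set β} {f g₁ g₂ : α → β → ℝ≥0∞}
    (hg₁ : Measurable (uncurry g₁)) (hg₂ : Measurable (uncurry g₂))
    (hf : ∀ x ∈ s, ∀ y ∈ t, f x y ≤ a * g₁ x y + b * g₂ x y) :
    ∫⁻ x in s, ∫⁻ y in t, f x y ∂ν ∂μ
      ≤ a * ∫⁻ x in s, ∫⁻ y in t, g₁ x y ∂ν ∂μ + b * ∫⁻ x in s, ∫⁻ y in t, g₂ x y ∂ν ∂μ :=
  setLIntegral_le_mul_add_mul hg₁.lintegral_prod_right hg₂.lintegral_prod_right fun x hx =>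
    setLIntegral_le_mul_add_mul (hg₁.comp measurable_prodMk_left)
      (hg₂.comp measurable_prodMk_left) (hf x hx)

end DoubleIntegral

/-- The integrand of `gagliardoSq s u`, which unfolds to its double integral over `[0, 2π)²`. -/
noncomputable def gagliardoKernel (s : ℝ) (u : ℝ → ℝ) (x y : ℝ) : ℝ≥0∞ :=
  ENNReal.ofReal (|u x - u y| ^ 2 / |x - y| ^ (1 + 2 * s))

theorem measurable_gagliardoKernel (s : ℝ) {u : ℝ → ℝ} (hu : Measurable u) :
    Measurable (uncurry (gagliardoKernel s u)) := by
  unfold gagliardoKernel uncurry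
  fun_prop

theorem gagliardoKernel_le_of_sq_le (s : ℝ) {F G U V : ℝ → ℝ} {c₁ c₂ x y : ℝ}
    (hc₁ : 0 ≤ c₁) (hc₂ : 0 ≤ c₂)
    (h : |F x - F y| ^ 2 ≤ c₁ * |G x - G y| ^ 2 + c₂ * (|U x - U y| ^ 2 + |V x - V y| ^ 2)) :
    gagliardoKernel s F x y ≤ ENNReal.ofReal c₁ * gagliardoKernel s G x y
      + ENNReal.ofReal c₂ * (gagliardoKernel s U x y + gagliardoKernel s V x y) := by
  unfold gagliardoKernel
  have hr : 0 ≤ |x - y| ^ (1 + 2 * s) := by positivity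
  rw [← ENNReal.ofReal_add (by positivity) (by positivity), ← ENNReal.ofReal_mul hc₁,
    ← ENNReal.ofReal_mul hc₂, ← ENNReal.ofReal_add (by positivity) (by positivity)]
  refine ENNReal.ofReal_le_ofReal ((div_le_div_of_nonneg_right h hr).trans_eq ?_)
  ring

theorem gagliardoKernel_comp_sub_le (s : ℝ) {f f' : ℝ → ℝ} {M S : ℝ}
    (hf : ∀ z, HasDerivAt f (f' z) z) (hM : ∀ z, |f' z| ≤ M)
    (hM' : ∀ p q, |f' p - f' q| ≤ M * |p - q|) {u₁ u₂ : ℝ → ℝ} (x : ℝ) {y : ℝ}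
    (hy : |u₁ y - u₂ y| ≤ S) :
    gagliardoKernel s (fun x => f (u₁ x) - f (u₂ x)) x y
      ≤ ENNReal.ofReal (2 * M ^ 2) * gagliardoKernel s (fun x => u₁ x - u₂ x) x y
        + ENNReal.ofReal (4 * M ^ 2 * S ^ 2)
          * (gagliardoKernel s u₁ x y + gagliardoKernel s u₂ x y) := by
  have hM0 : 0 ≤ M := (abs_nonneg _).trans (hM 0)
  refine gagliardoKernel_le_of_sq_le s (by positivity) (by positivity) ?_
  have hsecond := abs_sub_sub_sub_le_of_hasDerivAt hf hM hM' (u₁ x) (u₂ x) (u₁ y) (u₂ y)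
  have hsup : M * (|u₁ x - u₁ y| + |u₂ x - u₂ y|) * |u₁ y - u₂ y|
      ≤ M * (|u₁ x - u₁ y| + |u₂ x - u₂ y|) * S := by gcongr
  calc |f (u₁ x) - f (u₂ x) - (f (u₁ y) - f (u₂ y))| ^ 2
      ≤ (M * |u₁ x - u₂ x - (u₁ y - u₂ y)| + (M * S) * (|u₁ x - u₁ y| + |u₂ x - u₂ y|)) ^ 2 :=
        pow_le_pow_left₀ (abs_nonneg _) (by linarith) 2
    _ ≤ 2 * (M * |u₁ x - u₂ x - (u₁ y - u₂ y)|) ^ 2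
          + 4 * (M * S) ^ 2 * (|u₁ x - u₁ y| ^ 2 + |u₂ x - u₂ y| ^ 2) :=
        add_mul_add_sq_le _ _ _ _
    _ = _ := by ring

theorem composition_gagliardo_lipschitz_general (s : ℝ)
    (h : ℝ → ℝ) (M : ℝ) (hh : ContDiff ℝ 2 h)
    (h1 : ∀ z, |deriv h z| ≤ M) (h2 : ∀ z, |deriv (deriv h) z| ≤ M)
    (u₁ u₂ : ℝ → ℝ) (hm1 : Measurable u₁) (hm2 : Measurable u₂)
    (B : ℝ) (hb1 : ∀ x, |u₁ x| ≤ B) (hb2 : ∀ x, |u₂ x| ≤ B)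
    (k : ℝ)
    (hk1 : gagliardoSq s u₁ ≤ ENNReal.ofReal (k ^ 2))
    (hk2 : gagliardoSq s u₂ ≤ ENNReal.ofReal (k ^ 2)) :
    gagliardoSq s (fun x => h (u₁ x) - h (u₂ x))
      ≤ ENNReal.ofReal (2 * M ^ 2) * gagliardoSq s (fun x => u₁ x - u₂ x)
        + ENNReal.ofReal (8 * M ^ 2 * k ^ 2)
            * ENNReal.ofReal ((⨆ x : Set.Ico (0:ℝ) (2 * Real.pi), |u₁ x.1 - u₂ x.1|) ^ 2) := by
  set S := ⨆ x : Set.Ico (0:ℝ) (2 * Real.pi), |u₁ x.1 - u₂ x.1|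
  have hS : ∀ y ∈ Ico (0:ℝ) (2 * Real.pi), |u₁ y - u₂ y| ≤ S := fun y hy =>
    le_ciSup (f := fun x : Ico (0:ℝ) (2 * Real.pi) => |u₁ x.1 - u₂ x.1|)
      ⟨B + B, by rintro _ ⟨x, rfl⟩; exact (abs_sub _ _).trans (add_le_add (hb1 _) (hb2 _))⟩
      ⟨y, hy⟩
  have hderiv_lip : ∀ p q, |deriv h p - deriv h q| ≤ M * |p - q| := fun p q => by
    simpa only [Real.norm_eq_abs] using convex_univ.norm_image_sub_le_of_norm_deriv_le
      (fun x _ => hh.differentiable_deriv_two x)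
      (fun x _ => by simpa only [Real.norm_eq_abs] using h2 x) trivial trivial
  calc gagliardoSq s (fun x => h (u₁ x) - h (u₂ x))
      ≤ ENNReal.ofReal (2 * M ^ 2) * gagliardoSq s (fun x => u₁ x - u₂ x)
        + ENNReal.ofReal (4 * M ^ 2 * S ^ 2) * ∫⁻ x in Ico (0:ℝ) (2 * Real.pi),
          ∫⁻ y in Ico (0:ℝ) (2 * Real.pi), (gagliardoKernel s u₁ x y + gagliardoKernel s u₂ x y) :=
        setLIntegral_setLIntegral_le_mul_add_mul (measurable_gagliardoKernel s (hm1.sub hm2))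
          ((measurable_gagliardoKernel s hm1).add (measurable_gagliardoKernel s hm2))
          fun x _ y hy => gagliardoKernel_comp_sub_le s
            (fun z => ((hh.differentiable (by norm_num)) z).hasDerivAt) h1 hderiv_lip x (hS y hy)
    _ ≤ ENNReal.ofReal (2 * M ^ 2) * gagliardoSq s (fun x => u₁ x - u₂ x)
        + ENNReal.ofReal (4 * M ^ 2 * S ^ 2)
          * (ENNReal.ofReal (k ^ 2) + ENNReal.ofReal (k ^ 2)) := by
      gcongr
      refine (setLIntegral_setLIntegral_le_mul_add_mul (a := 1) (b := 1)
        (measurable_gagliardoKernel s hm1) (measurable_gagliardoKernel s hm2)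
        fun x _ y _ => by simp only [one_mul, le_refl]).trans ?_
      simp only [one_mul]
      exact add_le_add hk1 hk2
    _ = _ := by
      rw [← ENNReal.ofReal_add (by positivity) (by positivity),
        ← ENNReal.ofReal_mul (by positivity), ← ENNReal.ofReal_mul (by positivity)]
      ring_nf

/-- Local Lipschitz estimate in the Gagliardo seminorm for the composition operator
`u ↦ h ∘ u`: `[h∘u₁ - h∘u₂]²_s ≤ 2M²[u₁-u₂]²_s + 8M²k²‖u₁-u₂‖²_∞`. -/
theorem composition_gagliardo_lipschitz (s : ℝ) (hs : s ∈ Set.Ioo (0:ℝ) 1)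
    (h : ℝ → ℝ) (M : ℝ) (hh : ContDiff ℝ 2 h)
    (h1 : ∀ z, |deriv h z| ≤ M) (h2 : ∀ z, |deriv (deriv h) z| ≤ M)
    (u₁ u₂ : ℝ → ℝ) (hm1 : Measurable u₁) (hm2 : Measurable u₂)
    (B : ℝ) (hb1 : ∀ x, |u₁ x| ≤ B) (hb2 : ∀ x, |u₂ x| ≤ B)
    (k : ℝ) (hk : 0 ≤ k)
    (hk1 : gagliardoSq s u₁ ≤ ENNReal.ofReal (k ^ 2))
    (hk2 : gagliardoSq s u₂ ≤ ENNReal.ofReal (k ^ 2)) :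
    gagliardoSq s (fun x => h (u₁ x) - h (u₂ x))
      ≤ ENNReal.ofReal (2 * M ^ 2) * gagliardoSq s (fun x => u₁ x - u₂ x)
        + ENNReal.ofReal (8 * M ^ 2 * k ^ 2)
            * ENNReal.ofReal ((⨆ x : Set.Ico (0:ℝ) (2 * Real.pi), |u₁ x.1 - u₂ x.1|) ^ 2) :=
  composition_gagliardo_lipschitz_general s h M hh h1 h2 u₁ u₂ hm1 hm2 B hb1 hb2 k hk1 hk2
end

section
/- Let λ > 0, γ > 0 and s ∈ ℝ, and let (g_k)_{k∈ℤ} be complex numbers with Σ_{k∈ℤ} |g_k|² (1+k²)^s < ∞. Define ρ_k := −g_k / ( k²/(λ+γ) + λ ) for k ∈ ℤ. Then Σ_{k∈ℤ} |ρ_k|² (1+k²)^{s+2} ≤ ( 2(λ+γ) + 1/λ )² · Σ_{k∈ℤ} |g_k|² (1+k²)^s. -/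
/-!
The Fourier multiplier `1 / (k²/(λ+γ) + λ)` decays like `(1+k²)⁻¹`: since
`(2(λ+γ) + 1/λ)(k²/(λ+γ) + λ) = 2k² + 2λ(λ+γ) + k²/(λ(λ+γ)) + 1 ≥ 1 + k²`,
each term of the `H^{s+2}` sum is at most `(2(λ+γ)+1/λ)²` times the corresponding term of
the `H^s` sum, and the bound passes to the sums by comparison.
-/

theorem tsum_le_mul_tsum_of_le {ι : Type*} {f g : ι → ℝ} {c : ℝ} (hf : Summable f)
    (hg : ∀ i, 0 ≤ g i) (hgf : ∀ i, g i ≤ c * f i) : ∑' i, g i ≤ c * ∑' i, f i := by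
  have hcf : Summable fun i => c * f i := hf.mul_left c
  calc ∑' i, g i ≤ ∑' i, c * f i := (hcf.of_nonneg_of_le hg hgf).tsum_le_tsum hgf hcf
    _ = c * ∑' i, f i := tsum_mul_left

theorem one_add_le_mul_resolvent_symbol {a b x : ℝ} (ha : 0 < a) (hb : 0 < b) (hx : 0 ≤ x) :
    1 + x ≤ (2 * a + 1 / b) * (x / a + b) := by
  have hexpand : (2 * a + 1 / b) * (x / a + b) = 2 * x + 2 * a * b + x / (a * b) + 1 := by
    field_simp; ring
  have : 0 ≤ x / (a * b) := by positivity
  rw [hexpand]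
  nlinarith [mul_pos ha hb]

theorem norm_neg_div_sq_mul_rpow_add_two_le (z : ℂ) {d w C : ℝ} (s : ℝ) (hd : 0 < d)
    (hw : 0 < w) (hwC : w ≤ C * d) :
    ‖-z / (d : ℂ)‖ ^ 2 * w ^ (s + 2) ≤ C ^ 2 * (‖z‖ ^ 2 * w ^ s) := by
  have hwd : w / d ≤ C := (div_le_iff₀ hd).2 hwC
  calc ‖-z / (d : ℂ)‖ ^ 2 * w ^ (s + 2) = ‖z‖ ^ 2 * w ^ s * (w / d) ^ 2 := by
        rw [norm_div, norm_neg, Complex.norm_real, Real.norm_of_nonneg hd.le,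
          Real.rpow_add hw, Real.rpow_two]
        ring
    _ ≤ ‖z‖ ^ 2 * w ^ s * C ^ 2 := by gcongr
    _ = C ^ 2 * (‖z‖ ^ 2 * w ^ s) := by ring

/-- Elliptic regularity step in the Hille–Yosida verification for the damped-wave
operator: in Fourier coordinates, the solution `ρ_k = -g_k/(k²/(λ+γ)+λ)` of the
resolvent equation gains two derivatives, with
`Σ_k |ρ_k|²(1+k²)^{s+2} ≤ (2(λ+γ)+1/λ)² Σ_k |g_k|²(1+k²)^s`. -/
theorem resolvent_fourier_regularity (lam γ s : ℝ) (hlam : 0 < lam) (hγ : 0 < γ)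
    (g : ℤ → ℂ) (hg : Summable fun k : ℤ => ‖g k‖ ^ 2 * (1 + (k : ℝ) ^ 2) ^ s) :
    (∑' k : ℤ, ‖-g k / (((k : ℝ) ^ 2 / (lam + γ) + lam : ℝ) : ℂ)‖ ^ 2
        * (1 + (k : ℝ) ^ 2) ^ (s + 2))
      ≤ (2 * (lam + γ) + 1 / lam) ^ 2
          * ∑' k : ℤ, ‖g k‖ ^ 2 * (1 + (k : ℝ) ^ 2) ^ s := by
  have hlamγ : 0 < lam + γ := by linarith
  refine tsum_le_mul_tsum_of_le hg (fun k => by positivity) fun k => ?_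
  exact norm_neg_div_sq_mul_rpow_add_two_le (g k) s (by positivity) (by positivity)
    (one_add_le_mul_resolvent_symbol hlamγ hlam (sq_nonneg _))
end
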